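/- arXiv:1310.6950 — 7 statements merged into one kernel-verified Lean document; each statement's English description precedes it below -/
import Mathlib

section
/- Let A be a real n×n matrix with a simple strictly dominant eigenvalue λ₁ = ρ(A) > 0, with corresponding right eigenvector x₁ and left eigenvector x₁* normalized so that x₁* x₁ = 1. Then (1/ρ(A)^k) A^k converges (entrywise) to the rank-one matrix x₁ ⊗ x₁* (i.e., the matrix with entries x₁^i (x₁*)^j) as k → ∞. -/
/-!
Over `ℂ`, split `M = D + λ P` where `P = x y*` is the spectral projection onto the dominant
eigenline and `D = M - λ P` is the deflation. Since `P² = P` and `D P = P D = 0`, one has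
`M ^ (k + 1) = D ^ (k + 1) + λ ^ (k + 1) P`. A nonzero eigenvalue `μ` of `D` is an eigenvalue of
`M` whose eigenvector is annihilated by `y*`; simplicity of `λ` rules out `μ = λ`, so dominance
gives `|μ| < |λ|`. Hence the spectral radius of `D / λ` is below `1`, and Gelfand's formula makes
`(D / λ) ^ k` tend to `0`.
-/

open Matrix Polynomial Filter

variable {n : ℕ}

/-- The minor of `A` with row set `r` and column set `c` (taken in increasing order). -/
noncomputable def minor (A : Matrix (Fin n) (Fin n) ℝ) (r c : Finset (Fin n))
    (h : c.card = r.card) : ℝ :=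
  (A.submatrix (fun i : Fin r.card => (r.orderIsoOfFin rfl i).1)
      (fun i : Fin r.card => (c.orderIsoOfFin h i).1)).det

/-- The `j`-th compound matrix of `A`: the matrix of all `j × j` minors of `A`,
indexed by the `j`-element subsets of `Fin n` (ordered increasingly). -/
noncomputable def compound (A : Matrix (Fin n) (Fin n) ℝ) (j : ℕ) :
    Matrix {s : Finset (Fin n) // s.card = j} {s : Finset (Fin n) // s.card = j} ℝ :=
  Matrix.of fun r c =>
    (A.submatrix (fun i : Fin j => (r.1.orderIsoOfFin r.2 i).1)
      (fun i : Fin j => (c.1.orderIsoOfFin c.2 i).1)).det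

/-- Characteristic polynomial of a real matrix, viewed over `ℂ`. -/
noncomputable def charC {m : Type*} [Fintype m] [DecidableEq m] (A : Matrix m m ℝ) :
    Polynomial ℂ :=
  (A.map (Complex.ofReal)).charpoly

/-- `lam` is a positive simple strictly dominant eigenvalue of `A` with a strictly
positive eigenvector (the strong Perron–Frobenius property, with specified value). -/
def StrongPFAt {m : Type*} [Fintype m] [DecidableEq m] (A : Matrix m m ℝ) (lam : ℝ) : Prop :=
  0 < lam ∧ (charC A).IsRoot (lam : ℂ) ∧ (charC A).rootMultiplicity (lam : ℂ) = 1 ∧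
    (∀ μ : ℂ, (charC A).IsRoot μ → μ ≠ (lam : ℂ) → ‖μ‖ < lam) ∧
    ∃ v : m → ℝ, (∀ i, 0 < v i) ∧ A *ᵥ v = lam • v

/-- The strong Perron–Frobenius property. -/
def StrongPF {m : Type*} [Fintype m] [DecidableEq m] (A : Matrix m m ℝ) : Prop :=
  ∃ lam : ℝ, StrongPFAt A lam

/-- `M` is strictly `J`-sign-symmetric (for the given set `J`). -/
def SJSWith (J : Finset (Fin n)) (M : Matrix (Fin n) (Fin n) ℝ) : Prop :=
  ∀ i j : Fin n, ((i ∈ J ↔ j ∈ J) → 0 < M i j) ∧ (¬(i ∈ J ↔ j ∈ J) → M i j < 0)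

/-- `M` is strictly J-sign-symmetric for some `J ⊆ {1,…,n}`. -/
def SJS (M : Matrix (Fin n) (Fin n) ℝ) : Prop :=
  ∃ J : Finset (Fin n), SJSWith J M

/-- Eventually strictly J-sign-symmetric. -/
def ESJS (A : Matrix (Fin n) (Fin n) ℝ) : Prop :=
  ∃ k0 : ℕ, ∀ k ≥ k0, SJS (A ^ k)

/-- Eventually (entrywise) positive. -/
def EvPos {m : Type*} [Fintype m] [DecidableEq m] (A : Matrix m m ℝ) : Prop :=
  ∃ k0 : ℕ, ∀ k ≥ k0, ∀ i j, 0 < (A ^ k) i j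

/-- Strictly totally positive: all minors of all orders are positive. -/
def STP (A : Matrix (Fin n) (Fin n) ℝ) : Prop :=
  ∀ (r c : Finset (Fin n)) (h : c.card = r.card), r.Nonempty → 0 < minor A r c h

/-- Totally nonnegative: all minors of all orders are nonnegative. -/
def TotNonneg (A : Matrix (Fin n) (Fin n) ℝ) : Prop :=
  ∀ (r c : Finset (Fin n)) (h : c.card = r.card), 0 ≤ minor A r c h

/-- Eventually strictly totally positive. -/
def ESTP (A : Matrix (Fin n) (Fin n) ℝ) : Prop :=
  ∃ k0 : ℕ, ∀ k ≥ k0, STP (A ^ k)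

/-- The checkerboard transform `S* = ((-1)^(i+j) s_ij)`. -/
def checker (S : Matrix (Fin n) (Fin n) ℝ) : Matrix (Fin n) (Fin n) ℝ :=
  Matrix.of fun i j => (-1 : ℝ) ^ ((i : ℕ) + (j : ℕ)) * S i j

/-- The exterior product `x₀ ∧ ⋯ ∧ x_{j-1}` of the first `j` of the vectors `x`,
as a vector indexed by `j`-element subsets of `Fin n`. -/
noncomputable def wedge (x : Fin n → Fin n → ℝ) (j : ℕ) (hj : j ≤ n) :
    {s : Finset (Fin n) // s.card = j} → ℝ :=
  fun s => (Matrix.of fun a b : Fin j => x (Fin.castLE hj b) (s.1.orderIsoOfFin s.2 a).1).det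

open Topology
open scoped NNReal ENNReal

theorem IsIdempotentElem.add_smul_pow_succ {K R : Type*} [CommSemiring K] [Semiring R]
    [Algebra K R] {p q : R} (hp : IsIdempotentElem p) (hqp : q * p = 0) (hpq : p * q = 0)
    (c : K) (k : ℕ) : (q + c • p) ^ (k + 1) = q ^ (k + 1) + c ^ (k + 1) • p := by
  induction k with
  | zero => simp
  | succ k ih =>
    have hqkp : q ^ (k + 1) * p = 0 := by rw [pow_succ, mul_assoc, hqp, mul_zero]
    rw [pow_succ _ (k + 1), ih, add_mul, mul_add, mul_add, mul_smul_comm, hqkp, smul_mul_assoc,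
      hpq, smul_mul_smul, hp.eq, ← pow_succ, ← pow_succ]
    simp

theorem tendsto_pow_nhds_zero_of_spectralRadius_lt_one {A : Type*} [NormedRing A]
    [NormedAlgebra ℂ A] [CompleteSpace A] {a : A} (h : spectralRadius ℂ a < 1) :
    Tendsto (fun k : ℕ => a ^ k) atTop (𝓝 0) := by
  obtain ⟨c, hρc, hc1⟩ := ENNReal.lt_iff_exists_nnreal_btwn.mp h
  have hbound : ∀ᶠ k : ℕ in atTop, ‖a ^ k‖ ≤ (c : ℝ) ^ k := by
    filter_upwards [(spectrum.pow_nnnorm_pow_one_div_tendsto_nhds_spectralRadius a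
      ).eventually_lt_const hρc, eventually_ne_atTop 0] with k hk hk0
    rw [one_div, ENNReal.rpow_inv_lt_iff (by positivity), ENNReal.rpow_natCast] at hk
    exact_mod_cast hk.le
  exact squeeze_zero_norm' hbound
    (tendsto_pow_atTop_nhds_zero_of_lt_one c.coe_nonneg (by exact_mod_cast hc1))

theorem RingHom.map_mulVec_eq_smul {R S m : Type*} [CommSemiring R] [CommSemiring S]
    [Fintype m] (f : R →+* S) {A : Matrix m m R} {v : m → R} {c : R} (h : A *ᵥ v = c • v) :
    A.map f *ᵥ (f ∘ v) = f c • (f ∘ v) := by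
  ext i
  rw [← f.map_mulVec, h]
  simp

theorem RingHom.map_vecMul_eq_smul {R S m : Type*} [CommSemiring R] [CommSemiring S]
    [Fintype m] (f : R →+* S) {A : Matrix m m R} {v : m → R} {c : R} (h : v ᵥ* A = c • v) :
    (f ∘ v) ᵥ* A.map f = f c • (f ∘ v) := by
  ext i
  rw [← f.map_vecMul, h]
  simp

namespace Matrix

variable {m : Type*} [Fintype m]

theorem tendsto_pow_nhds_zero_of_forall_norm_lt_one [DecidableEq m] {B : Matrix m m ℂ}
    (h : ∀ μ ∈ spectrum ℂ B, ‖μ‖ < 1) :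
    Tendsto (fun k : ℕ => B ^ k) atTop (𝓝 0) := by
  -- the `ℓ∞` operator norm induces the entrywise topology, so the conclusion is unaffected
  let _ : NormedRing (Matrix m m ℂ) := Matrix.linftyOpNormedRing
  let _ : NormedAlgebra ℂ (Matrix m m ℂ) := Matrix.linftyOpNormedAlgebra
  refine tendsto_pow_nhds_zero_of_spectralRadius_lt_one ?_
  set S := (finite_spectrum B).toFinset
  have hS : S.sup (‖·‖₊) < 1 :=
    (Finset.sup_lt_iff zero_lt_one).mpr fun μ hμ => h μ ((finite_spectrum B).mem_toFinset.mp hμ)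
  calc spectralRadius ℂ B ≤ ((S.sup (‖·‖₊) : ℝ≥0) : ℝ≥0∞) :=
        iSup₂_le fun μ hμ => ENNReal.coe_le_coe.mpr
          (Finset.le_sup (f := (‖·‖₊)) ((finite_spectrum B).mem_toFinset.mpr hμ))
    _ < 1 := by exact_mod_cast hS

section Field

variable {K : Type*} [Field K]

theorem mem_spectrum_iff_exists_mulVec_eq_smul [DecidableEq m] {M : Matrix m m K} {μ : K} :
    μ ∈ spectrum K M ↔ ∃ v ≠ 0, M *ᵥ v = μ • v := by
  rw [← spectrum_toLin', ← Module.End.hasEigenvalue_iff_mem_spectrum,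
    Module.End.hasEigenvalue_iff, Submodule.ne_bot_iff]
  simp only [Module.End.mem_eigenspace_iff, toLin'_apply]
  exact ⟨fun ⟨v, hv, hv0⟩ => ⟨v, hv0, hv⟩, fun ⟨v, hv0, hv⟩ => ⟨v, hv, hv0⟩⟩

theorem exists_smul_eq_of_rootMultiplicity_charpoly_le_one [DecidableEq m] {M : Matrix m m K}
    {lam : K} {x v : m → K} (hmult : M.charpoly.rootMultiplicity lam ≤ 1)
    (hx : M *ᵥ x = lam • x) (hx0 : x ≠ 0) (hv : M *ᵥ v = lam • v) : ∃ c : K, c • x = v := by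
  let E := Module.End.eigenspace (toLin' M) lam
  have hxE : x ∈ E := Module.End.mem_eigenspace_iff.mpr (by rwa [toLin'_apply])
  have hvE : v ∈ E := Module.End.mem_eigenspace_iff.mpr (by rwa [toLin'_apply])
  have hE : Module.finrank K E = 1 := by
    refine le_antisymm ((LinearMap.finrank_eigenspace_le _ _).trans (by rwa [charpoly_toLin'])) ?_
    exact Submodule.one_le_finrank_iff.mpr ((Submodule.ne_bot_iff _).mpr ⟨x, hxE, hx0⟩)
  obtain ⟨c, hc⟩ :=
    (finrank_eq_one_iff_of_nonzero' (⟨x, hxE⟩ : E) (by simpa using hx0)).mp hE ⟨v, hvE⟩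
  exact ⟨c, congrArg Subtype.val hc⟩

section Deflation

variable {M : Matrix m m K} {lam : K} {x y : m → K}

def deflation (M : Matrix m m K) (lam : K) (x y : m → K) : Matrix m m K :=
  M - lam • vecMulVec x y

theorem deflation_mulVec (hx : M *ᵥ x = lam • x) (hyx : y ⬝ᵥ x = 1) :
    deflation M lam x y *ᵥ x = 0 := by
  rw [deflation, sub_mulVec, smul_mulVec, vecMulVec_mulVec, hyx, hx]
  simp

theorem vecMul_deflation (hy : y ᵥ* M = lam • y) (hyx : y ⬝ᵥ x = 1) :
    y ᵥ* deflation M lam x y = 0 := by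
  rw [deflation, vecMul_sub, vecMul_smul, vecMul_vecMulVec, hyx, hy, one_smul, sub_self]

theorem isIdempotentElem_vecMulVec (hyx : y ⬝ᵥ x = 1) : IsIdempotentElem (vecMulVec x y) := by
  rw [IsIdempotentElem, vecMulVec_mul_vecMulVec, hyx, one_smul]

theorem pow_succ_eq_deflation_pow_add [DecidableEq m] (hx : M *ᵥ x = lam • x)
    (hy : y ᵥ* M = lam • y) (hyx : y ⬝ᵥ x = 1) (k : ℕ) :
    M ^ (k + 1) = deflation M lam x y ^ (k + 1) + lam ^ (k + 1) • vecMulVec x y := by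
  conv_lhs => rw [← sub_add_cancel M (lam • vecMulVec x y)]
  change (deflation M lam x y + lam • vecMulVec x y) ^ (k + 1) = _
  refine (isIdempotentElem_vecMulVec hyx).add_smul_pow_succ ?_ ?_ lam k
  · rw [mul_vecMulVec, deflation_mulVec hx hyx, zero_vecMulVec]
  · rw [vecMulVec_mul, vecMul_deflation hy hyx, vecMulVec_zero]

theorem dotProduct_eq_zero_and_mulVec_eq_of_deflation (hy : y ᵥ* M = lam • y)
    (hyx : y ⬝ᵥ x = 1) {μ : K} {v : m → K} (hμ : μ ≠ 0)
    (hv : deflation M lam x y *ᵥ v = μ • v) : y ⬝ᵥ v = 0 ∧ M *ᵥ v = μ • v := by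
  have hyv : y ⬝ᵥ v = 0 := by
    have h : μ * (y ⬝ᵥ v) = 0 := by
      rw [← smul_eq_mul, ← dotProduct_smul, ← hv, dotProduct_mulVec, vecMul_deflation hy hyx,
        zero_dotProduct]
    exact (mul_eq_zero.mp h).resolve_left hμ
  refine ⟨hyv, ?_⟩
  rw [← hv, deflation, sub_mulVec, smul_mulVec, vecMulVec_mulVec, hyv]
  simp

end Deflation

end Field

theorem norm_lt_of_deflation_mulVec_eq_smul {K : Type*} [NormedField K] [DecidableEq m]
    {M : Matrix m m K} {lam μ : K} {x y v : m → K} (hlam : lam ≠ 0)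
    (hmult : M.charpoly.rootMultiplicity lam ≤ 1)
    (hdom : ∀ μ ∈ spectrum K M, μ ≠ lam → ‖μ‖ < ‖lam‖)
    (hx : M *ᵥ x = lam • x) (hy : y ᵥ* M = lam • y) (hyx : y ⬝ᵥ x = 1)
    (hv0 : v ≠ 0) (hv : deflation M lam x y *ᵥ v = μ • v) : ‖μ‖ < ‖lam‖ := by
  rcases eq_or_ne μ 0 with rfl | hμ
  · simpa using hlam
  obtain ⟨hyv, hMv⟩ := dotProduct_eq_zero_and_mulVec_eq_of_deflation hy hyx hμ hv
  refine hdom μ (mem_spectrum_iff_exists_mulVec_eq_smul.mpr ⟨v, hv0, hMv⟩) fun hμlam => hv0 ?_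
  have hx0 : x ≠ 0 := by rintro rfl; simp at hyx
  subst hμlam
  obtain ⟨c, rfl⟩ := exists_smul_eq_of_rootMultiplicity_charpoly_le_one hmult hx hx0 hMv
  rw [dotProduct_smul, hyx, smul_eq_mul, mul_one] at hyv
  rw [hyv, zero_smul]

theorem tendsto_inv_pow_smul_pow_nhds_vecMulVec [DecidableEq m] {M : Matrix m m ℂ} {lam : ℂ}
    {x y : m → ℂ} (hlam : lam ≠ 0) (hmult : M.charpoly.rootMultiplicity lam ≤ 1)
    (hdom : ∀ μ ∈ spectrum ℂ M, μ ≠ lam → ‖μ‖ < ‖lam‖)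
    (hx : M *ᵥ x = lam • x) (hy : y ᵥ* M = lam • y) (hyx : y ⬝ᵥ x = 1) :
    Tendsto (fun k : ℕ => (lam ^ k)⁻¹ • M ^ k) atTop (𝓝 (vecMulVec x y)) := by
  set B := lam⁻¹ • deflation M lam x y
  have hB : ∀ ν ∈ spectrum ℂ B, ‖ν‖ < 1 := by
    intro ν hν
    obtain ⟨v, hv0, hv⟩ := mem_spectrum_iff_exists_mulVec_eq_smul.mp hν
    have hDv : deflation M lam x y *ᵥ v = (lam * ν) • v := by
      rw [mul_smul, ← hv, smul_mulVec, smul_inv_smul₀ hlam]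
    have := norm_lt_of_deflation_mulVec_eq_smul hlam hmult hdom hx hy hyx hv0 hDv
    rw [norm_mul] at this
    exact (mul_lt_iff_lt_one_right (norm_pos_iff.mpr hlam)).mp this
  have hpow (k : ℕ) : (lam ^ (k + 1))⁻¹ • M ^ (k + 1) = B ^ (k + 1) + vecMulVec x y := by
    rw [pow_succ_eq_deflation_pow_add hx hy hyx, smul_add, smul_smul,
      inv_mul_cancel₀ (pow_ne_zero _ hlam), one_smul, _root_.smul_pow, inv_pow]
  rw [← Filter.tendsto_add_atTop_iff_nat 1]
  simp_rw [hpow]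
  simpa using ((tendsto_pow_nhds_zero_of_forall_norm_lt_one hB).comp
    (tendsto_add_atTop_nat 1)).add_const (vecMulVec x y)

theorem tendsto_of_tendsto_map_ofReal {ι m : Type*} {l : Filter ι} {f : ι → Matrix m m ℝ}
    {L : Matrix m m ℝ}
    (h : Tendsto (fun i => (f i).map Complex.ofReal) l (𝓝 (L.map Complex.ofReal))) :
    Tendsto f l (𝓝 L) := by
  simpa [Function.comp_def, map_map] using
    ((continuous_id.matrix_map Complex.continuous_re).tendsto _).comp h

end Matrix

theorem stmt0_general (A : Matrix (Fin n) (Fin n) ℝ) (lam : ℝ) (x xs : Fin n → ℝ)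
    (hpos : 0 < lam)
    (hsimple : (charC A).rootMultiplicity (lam : ℂ) = 1)
    (hdom : ∀ μ : ℂ, (charC A).IsRoot μ → μ ≠ (lam : ℂ) → ‖μ‖ < lam)
    (hx : A *ᵥ x = lam • x) (hxs : Aᵀ *ᵥ xs = lam • xs)
    (hnorm : ∑ i, xs i * x i = 1) :
    Tendsto (fun k : ℕ => (lam ^ k)⁻¹ • A ^ k) atTop
      (nhds (Matrix.of fun i j => x i * xs j)) := by
  have hlam : (lam : ℂ) ≠ 0 := by exact_mod_cast hpos.ne'
  have hdomC :
      ∀ μ ∈ spectrum ℂ (A.map Complex.ofReal), μ ≠ (lam : ℂ) → ‖μ‖ < ‖(lam : ℂ)‖ := by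
    intro μ hμ hμlam
    rw [Complex.norm_real, Real.norm_of_nonneg hpos.le]
    exact hdom μ (mem_spectrum_iff_isRoot_charpoly.mp hμ) hμlam
  have hxs' : xs ᵥ* A = lam • xs := by rwa [← mulVec_transpose]
  have hnormC : (Complex.ofReal ∘ xs) ⬝ᵥ (Complex.ofReal ∘ x) = 1 := by
    simpa [dotProduct] using congrArg Complex.ofReal hnorm
  refine tendsto_of_tendsto_map_ofReal ?_
  convert tendsto_inv_pow_smul_pow_nhds_vecMulVec hlam hsimple.le hdomC
    (Complex.ofRealHom.map_mulVec_eq_smul hx) (Complex.ofRealHom.map_vecMul_eq_smul hxs') hnormC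
    using 2 with k
  · rw [show A.map Complex.ofReal ^ k = (A ^ k).map Complex.ofReal from
      (Matrix.map_pow A Complex.ofRealHom k).symm]
    ext i j
    simp
  · ext i j
    simp [vecMulVec_apply]

/-- power method convergence to the rank-one spectral projection. -/
theorem stmt0 (A : Matrix (Fin n) (Fin n) ℝ) (lam : ℝ) (x xs : Fin n → ℝ)
    (hpos : 0 < lam)
    (hroot : (charC A).IsRoot (lam : ℂ))
    (hsimple : (charC A).rootMultiplicity (lam : ℂ) = 1)
    (hdom : ∀ μ : ℂ, (charC A).IsRoot μ → μ ≠ (lam : ℂ) → ‖μ‖ < lam)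
    (hx : A *ᵥ x = lam • x) (hxs : Aᵀ *ᵥ xs = lam • xs)
    (hnorm : ∑ i, xs i * x i = 1) :
    Tendsto (fun k : ℕ => (lam ^ k)⁻¹ • A ^ k) atTop
      (nhds (Matrix.of fun i j => x i * xs j)) :=
  stmt0_general A lam x xs hpos hsimple hdom hx hxs hnorm
end

section
/- A real n×n matrix A is eventually strictly J-sign-symmetric (i.e., there exists k₀ such that A^k is strictly J-sign-symmetric for all k ≥ k₀) if and only if A = D Ã D⁻¹ where Ã is an eventually positive matrix and D is a nonsingular diagonal matrix. -/
open Matrix Polynomial Filter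

variable {n : ℕ}

/-!
Conjugation by a nonsingular diagonal matrix `diag d` carries the entrywise positive matrices
exactly onto the strictly `J`-sign-symmetric ones for `J = {i | 0 < d i}`, and every `J` arises
this way (take for `d` the `±1` signature of `J`). Conjugation commutes with powers, so the
theorem reduces to showing that the set `J` of an eventually strictly sign-symmetric matrix can
be chosen independently of `k`. This holds because strict `J`-sign-symmetry is closed under
products and a matrix determines its sign pattern: `A ^ ((k₀ + 1) * k)` is a power both of
`A ^ (k₀ + 1)` and of `A ^ k`.
-/

def signVec (J : Finset (Fin n)) (i : Fin n) : ℝ := if i ∈ J then 1 else -1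

lemma signVec_mul_self (J : Finset (Fin n)) (i : Fin n) : signVec J i * signVec J i = 1 := by
  unfold signVec; split_ifs <;> norm_num

lemma signVec_ne_zero (J : Finset (Fin n)) (i : Fin n) : signVec J i ≠ 0 := by
  unfold signVec; split_ifs <;> norm_num

lemma signVec_inv (J : Finset (Fin n)) (i : Fin n) : (signVec J i)⁻¹ = signVec J i := by
  unfold signVec; split_ifs <;> norm_num

lemma filter_pos_signVec (J : Finset (Fin n)) :
    ({i | 0 < signVec J i} : Finset (Fin n)) = J := by
  ext i; unfold signVec; by_cases hi : i ∈ J <;> simp [hi]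

lemma signVec_filter_pos_mul_pos {d : Fin n → ℝ} (hd : ∀ i, d i ≠ 0) (i : Fin n) :
    0 < signVec {i | 0 < d i} i * d i := by
  unfold signVec
  rcases (hd i).lt_or_gt with h | h <;> simp [h, h.not_gt]

lemma sjsWith_iff_pos_signVec_mul {J : Finset (Fin n)} {M : Matrix (Fin n) (Fin n) ℝ} :
    SJSWith J M ↔ ∀ i j, 0 < signVec J i * signVec J j * M i j := by
  refine forall₂_congr fun i j => ?_
  unfold signVec
  by_cases hi : i ∈ J <;> by_cases hj : j ∈ J <;> simp [hi, hj]

lemma SJSWith.mul [Nonempty (Fin n)] {J : Finset (Fin n)} {M N : Matrix (Fin n) (Fin n) ℝ}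
    (hM : SJSWith J M) (hN : SJSWith J N) : SJSWith J (M * N) := by
  rw [sjsWith_iff_pos_signVec_mul] at *
  intro i j
  have hsum : signVec J i * signVec J j * (M * N) i j
      = ∑ l, (signVec J i * signVec J l * M i l) * (signVec J l * signVec J j * N l j) := by
    rw [mul_apply, Finset.mul_sum]
    refine Finset.sum_congr rfl fun l _ => ?_
    linear_combination (-(signVec J i * signVec J j * M i l * N l j)) * signVec_mul_self J l
  rw [hsum]
  exact Finset.sum_pos (fun l _ => mul_pos (hM i l) (hN l j)) Finset.univ_nonempty

lemma SJSWith.pow [Nonempty (Fin n)] {J : Finset (Fin n)} {M : Matrix (Fin n) (Fin n) ℝ}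
    (hM : SJSWith J M) {p : ℕ} (hp : p ≠ 0) : SJSWith J (M ^ p) := by
  obtain ⟨p, rfl⟩ := Nat.exists_eq_succ_of_ne_zero hp
  induction p with
  | zero => simpa using hM
  | succ p ih => rw [pow_succ]; exact (ih p.succ_ne_zero).mul hM

/-- The sign pattern of `M` determines the relation `i ∈ J ↔ j ∈ J`, so `J` and `J'` are
interchangeable. -/
lemma SJSWith.transfer {J J' : Finset (Fin n)} {M N : Matrix (Fin n) (Fin n) ℝ}
    (hJ : SJSWith J M) (hJ' : SJSWith J' M) (hN : SJSWith J' N) : SJSWith J N := by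
  have hsame : ∀ i j, (i ∈ J ↔ j ∈ J) ↔ (i ∈ J' ↔ j ∈ J') := fun i j => by
    have := hJ i j; have := hJ' i j; have := hN i j
    constructor <;> intro h <;> by_contra h' <;> grind
  intro i j
  rw [hsame]
  exact hN i j

lemma ESJS.exists_sjsWith_pow {A : Matrix (Fin n) (Fin n) ℝ} (hA : ESJS A) :
    ∃ J k₁, ∀ k ≥ k₁, SJSWith J (A ^ k) := by
  rcases isEmpty_or_nonempty (Fin n) with hn | hn
  · exact ⟨∅, 0, fun _ _ i => isEmptyElim i⟩
  obtain ⟨k₀, hk₀⟩ := hA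
  obtain ⟨J, hJ⟩ := hk₀ (k₀ + 1) (by omega)
  refine ⟨J, k₀ + 1, fun k hk => ?_⟩
  obtain ⟨J', hJ'⟩ := hk₀ k (by omega)
  have h₁ : SJSWith J (A ^ ((k₀ + 1) * k)) := by rw [pow_mul]; exact hJ.pow (by omega)
  have h₂ : SJSWith J' (A ^ ((k₀ + 1) * k)) := by
    rw [mul_comm, pow_mul]; exact hJ'.pow (by omega)
  exact h₁.transfer h₂ hJ'

lemma diagonal_conj_pow {d : Fin n → ℝ} (hd : ∀ i, d i ≠ 0) (B : Matrix (Fin n) (Fin n) ℝ)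
    (k : ℕ) : (diagonal d * B * diagonal fun i => (d i)⁻¹) ^ k
      = diagonal d * B ^ k * diagonal fun i => (d i)⁻¹ :=
  let u : (Matrix (Fin n) (Fin n) ℝ)ˣ :=
    ⟨diagonal d, diagonal fun i => (d i)⁻¹, by simp [hd], by simp [hd]⟩
  u.conj_pow B k

lemma diagonal_conj_inv_conj {d : Fin n → ℝ} (hd : ∀ i, d i ≠ 0)
    (A : Matrix (Fin n) (Fin n) ℝ) :
    diagonal d * (diagonal (fun i => (d i)⁻¹) * A * diagonal d) * diagonal (fun i => (d i)⁻¹)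
      = A := by
  ext i j
  simp only [mul_diagonal, diagonal_mul]
  field_simp [hd i, hd j]

lemma sjsWith_diagonal_conj_iff {d : Fin n → ℝ} (hd : ∀ i, d i ≠ 0)
    (M : Matrix (Fin n) (Fin n) ℝ) :
    SJSWith {i | 0 < d i} (diagonal d * M * diagonal fun i => (d i)⁻¹) ↔
      ∀ i j, 0 < M i j := by
  rw [sjsWith_iff_pos_signVec_mul]
  refine forall₂_congr fun i j => ?_
  set s := signVec {i | 0 < d i}
  have hsi : 0 < s i * d i := signVec_filter_pos_mul_pos hd i
  have hsj : 0 < s j * d j := signVec_filter_pos_mul_pos hd j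
  rw [mul_diagonal, diagonal_mul,
    show s i * s j * (d i * M i j * (d j)⁻¹) = s i * d i * (s j * d j)⁻¹ * M i j by
      rw [mul_inv, signVec_inv]; ring]
  exact mul_pos_iff_of_pos_left (mul_pos hsi (inv_pos.2 hsj))

/-- `A` is eventually strictly J-sign-symmetric iff it is diagonally
similar to an eventually positive matrix. -/
theorem stmt1 (A : Matrix (Fin n) (Fin n) ℝ) :
    ESJS A ↔ ∃ (d : Fin n → ℝ) (B : Matrix (Fin n) (Fin n) ℝ),
      (∀ i, d i ≠ 0) ∧ EvPos B ∧
        A = diagonal d * B * diagonal (fun i => (d i)⁻¹) := by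
  constructor
  · intro hA
    obtain ⟨J, k₁, hJ⟩ := hA.exists_sjsWith_pow
    have hs := signVec_ne_zero J
    set B := diagonal (fun i => (signVec J i)⁻¹) * A * diagonal (signVec J)
    have hAB : A = diagonal (signVec J) * B * diagonal fun i => (signVec J i)⁻¹ :=
      (diagonal_conj_inv_conj hs A).symm
    refine ⟨signVec J, B, hs, ⟨k₁, fun k hk => ?_⟩, hAB⟩
    apply (sjsWith_diagonal_conj_iff hs _).1
    rw [filter_pos_signVec, ← diagonal_conj_pow hs, ← hAB]
    exact hJ k hk
  · rintro ⟨d, B, hd, ⟨k₀, hB⟩, rfl⟩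
    refine ⟨k₀, fun k hk => ⟨({i | 0 < d i} : Finset (Fin n)), ?_⟩⟩
    rw [diagonal_conj_pow hd, sjsWith_diagonal_conj_iff hd]
    exact hB k hk
end

section
/- If a real n×n matrix A has the signature equality property, then A is eventually strictly J-sign-symmetric: there exists k₀ such that A^k is strictly J-sign-symmetric for all k ≥ k₀ (with J = {i : x^i > 0} where x is the dominant eigenvector). -/
open Matrix Polynomial Filter

variable {n : ℕ}

/-!
Let `P = x x*ᵀ / (x* ⬝ x)` be the spectral projector of `λ`. Then `A ^ (k + 1) = N ^ (k + 1) +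
λ ^ (k + 1) P` with `N = A - λ P`, and by Brauer's theorem the spectrum of `N` is that of `A` with
`λ` replaced by `0`. Hence `N` has spectral radius `< λ`, Gelfand's formula gives `λ⁻ᵏ Aᵏ → P`,
and the entries of `P` have the signs of `xⁱ xʲ`; strict sign patterns are stable under small
perturbations.
-/

open Topology

theorem add_pow_succ_of_mul_eq_zero {R : Type*} [Semiring R] {a b : R} (hab : a * b = 0)
    (hba : b * a = 0) (k : ℕ) : (a + b) ^ (k + 1) = a ^ (k + 1) + b ^ (k + 1) := by
  induction k with
  | zero => simp
  | succ k ih =>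
    have hab' : a ^ (k + 1) * b = 0 := by rw [pow_succ, mul_assoc, hab, mul_zero]
    have hba' : b ^ (k + 1) * a = 0 := by rw [pow_succ, mul_assoc, hba, mul_zero]
    rw [pow_succ, ih, add_mul, mul_add, mul_add, hab', hba', add_zero, zero_add, ← pow_succ,
      ← pow_succ]

namespace Matrix

variable {m K : Type*} [Fintype m] [DecidableEq m]

theorem pow_succ_eq_sub_vecMulVec_pow_add [CommRing K] {A : Matrix m m K} {lam : K}
    {x y : m → K} (hx : A *ᵥ x = lam • x) (hy : Aᵀ *ᵥ y = lam • y) (hyx : y ⬝ᵥ x = 1)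
    (k : ℕ) :
    A ^ (k + 1) = (A - lam • vecMulVec x y) ^ (k + 1) + lam ^ (k + 1) • vecMulVec x y := by
  set P := vecMulVec x y
  have hAP : A * P = lam • P := by rw [mul_vecMulVec, hx, smul_vecMulVec]
  have hPA : P * A = lam • P := by
    rw [vecMulVec_mul, ← mulVec_transpose, hy, vecMulVec_smul]
  have hPP : IsIdempotentElem P := by
    rw [IsIdempotentElem, vecMulVec_mul_vecMulVec, hyx, one_smul]
  have hNP : (A - lam • P) * (lam • P) = 0 := by
    rw [sub_mul, mul_smul_comm, hAP, smul_mul_assoc, mul_smul_comm, hPP.eq, sub_self]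
  have hPN : (lam • P) * (A - lam • P) = 0 := by
    rw [mul_sub, smul_mul_assoc, hPA, smul_mul_assoc, mul_smul_comm, hPP.eq, sub_self]
  conv_lhs => rw [← sub_add_cancel A (lam • P)]
  rw [add_pow_succ_of_mul_eq_zero hNP hPN, _root_.smul_pow, hPP.pow_succ_eq]

/-- Brauer's theorem. -/
theorem charpoly_sub_vecMulVec [Field K] [Infinite K] {A : Matrix m m K} {lam : K}
    {u : m → K} (hu : A *ᵥ u = lam • u) (v : m → K) :
    (X - C lam) * (A - vecMulVec u v).charpoly = (X - C (lam - v ⬝ᵥ u)) * A.charpoly := by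
  refine eq_of_infinite_eval_eq _ _ ((Set.finite_singleton lam).infinite_compl.mono ?_)
  intro t (ht : t ≠ lam)
  have ht' : t - lam ≠ 0 := sub_ne_zero.2 ht
  set B := scalar m t - A
  have hBu : B *ᵥ u = (t - lam) • u := by
    simp [B, sub_mulVec, hu, sub_smul]
  -- `B u = (t - λ) u` factors the perturbed matrix through `B` without inverting `B`.
  have hfactor : scalar m t - (A - vecMulVec u v) = B * (1 + vecMulVec ((t - lam)⁻¹ • u) v) := by
    rw [mul_add, mul_one, mul_vecMulVec, mulVec_smul, hBu, smul_smul, inv_mul_cancel₀ ht',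
      one_smul, sub_sub_eq_add_sub, add_sub_right_comm]
  simp only [Set.mem_ofPred_eq, eval_mul, eval_sub, eval_X, eval_C, eval_charpoly]
  rw [hfactor, det_mul, vecMulVec_eq Unit, det_one_add_replicateCol_mul_replicateRow,
    dotProduct_smul, smul_eq_mul]
  field_simp
  ring

end Matrix

theorem Polynomial.eq_zero_or_isRoot_of_X_sub_C_mul_eq_X_mul {R : Type*} [CommRing R]
    [IsDomain R] {p q : R[X]} {a μ : R} (hpq : (X - C a) * q = X * p) (hp : p ≠ 0)
    (ha : a ≠ 0) (hsimple : p.rootMultiplicity a = 1) (hμ : q.IsRoot μ) :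
    μ = 0 ∨ (p.IsRoot μ ∧ μ ≠ a) := by
  have hq : q ≠ 0 := by rintro rfl; simp [X_ne_zero, hp] at hpq
  have hμa : μ ≠ a := by
    rintro rfl
    have h := congrArg (rootMultiplicity μ) hpq
    rw [rootMultiplicity_mul (mul_ne_zero (X_sub_C_ne_zero μ) hq),
      rootMultiplicity_mul (mul_ne_zero X_ne_zero hp), rootMultiplicity_X_sub_C_self,
      rootMultiplicity_eq_zero (p := X) (by simpa using ha), hsimple] at h
    have := (rootMultiplicity_pos hq).2 hμ
    omega
  have h := congrArg (eval μ) hpq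
  simp only [eval_mul, eval_sub, eval_X, eval_C, hμ.eq_zero, mul_zero] at h
  rcases mul_eq_zero.1 h.symm with h0 | h0
  · exact .inl h0
  · exact .inr ⟨h0, hμa⟩

theorem tendsto_inv_pow_smul_pow_of_spectralRadius_lt {A : Type*} [NormedRing A]
    [NormedAlgebra ℂ A] [CompleteSpace A] {a : A} {r : ℝ}
    (h : spectralRadius ℂ a < ENNReal.ofReal r) :
    Tendsto (fun k : ℕ => ((r : ℂ) ^ k)⁻¹ • a ^ k) atTop (𝓝 0) := by
  obtain ⟨ρ, haρ, hρr⟩ := ENNReal.lt_iff_exists_nnreal_btwn.1 h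
  have hρr : (ρ : ℝ) < r := Real.lt_toNNReal_iff_coe_lt.1 (ENNReal.coe_lt_coe.1 hρr)
  have hr : 0 < r := ρ.coe_nonneg.trans_lt hρr
  have hgelfand := spectrum.pow_nnnorm_pow_one_div_tendsto_nhds_spectralRadius a
  have hbound : ∀ᶠ k : ℕ in atTop, ‖a ^ k‖ ≤ ρ ^ k := by
    filter_upwards [hgelfand.eventually_lt_const haρ, eventually_ne_atTop 0] with k hk hk_ne
    have hk0 : (0 : ℝ) < k := by exact_mod_cast Nat.pos_of_ne_zero hk_ne
    have h := ENNReal.rpow_lt_rpow hk hk0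
    rw [← ENNReal.rpow_mul, one_div, inv_mul_cancel₀ hk0.ne', ENNReal.rpow_one,
      ENNReal.rpow_natCast, ← ENNReal.coe_pow, ENNReal.coe_lt_coe] at h
    exact_mod_cast h.le
  rw [tendsto_zero_iff_norm_tendsto_zero]
  refine squeeze_zero' (.of_forall fun _ => norm_nonneg _) ?_
    (tendsto_pow_atTop_nhds_zero_of_lt_one (by positivity) ((div_lt_one hr).2 hρr))
  filter_upwards [hbound] with k hk
  rw [norm_smul, norm_inv, norm_pow, Complex.norm_of_nonneg hr.le, div_pow, inv_mul_eq_div]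
  gcongr

section PowerConvergence

variable {m : Type*} [Fintype m] [DecidableEq m]

attribute [local instance] Matrix.linftyOpNormedRing Matrix.linftyOpNormedAlgebra in
theorem tendsto_inv_pow_smul_pow_of_charC_roots_lt [Nonempty m] {N : Matrix m m ℝ} {r : ℝ}
    (hroots : ∀ μ : ℂ, (charC N).IsRoot μ → ‖μ‖ < r) :
    Tendsto (fun k : ℕ => (r ^ k)⁻¹ • N ^ k) atTop (𝓝 0) := by
  have hρ : spectralRadius ℂ (N.map Complex.ofReal) < ENNReal.ofReal r :=
    spectrum.spectralRadius_lt_of_forall_lt _ fun μ hμ => by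
      rw [Matrix.mem_spectrum_iff_isRoot_charpoly] at hμ
      exact Real.lt_toNNReal_iff_coe_lt.2 (hroots μ hμ)
  have hre : Continuous fun M : Matrix m m ℂ => M.map Complex.re :=
    continuous_id.matrix_map Complex.continuous_re
  convert (hre.tendsto 0).comp (tendsto_inv_pow_smul_pow_of_spectralRadius_lt hρ) using 1
  · ext k i j
    have hmap : N.map Complex.ofReal ^ k = (N ^ k).map Complex.ofReal :=
      (Matrix.map_pow N Complex.ofRealHom k).symm
    simp only [Function.comp_apply, hmap, Matrix.smul_apply, map_apply, smul_eq_mul,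
      ← Complex.ofReal_pow, ← Complex.ofReal_inv, ← Complex.ofReal_mul, Complex.ofReal_re]
  · simp

theorem tendsto_inv_pow_smul_pow_nhds_vecMulVec [Nonempty m] {A : Matrix m m ℝ} {lam : ℝ}
    {x y : m → ℝ} (hpos : 0 < lam) (hsimple : (charC A).rootMultiplicity (lam : ℂ) = 1)
    (hdom : ∀ μ : ℂ, (charC A).IsRoot μ → μ ≠ (lam : ℂ) → ‖μ‖ < lam)
    (hx : A *ᵥ x = lam • x) (hy : Aᵀ *ᵥ y = lam • y) (hyx : y ⬝ᵥ x = 1) :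
    Tendsto (fun k : ℕ => (lam ^ k)⁻¹ • A ^ k) atTop (𝓝 (vecMulVec x y)) := by
  set N := A - lam • vecMulVec x y
  have hchar : (X - C (lam : ℂ)) * charC N = X * charC A := by
    have h := congrArg (Polynomial.map Complex.ofRealHom)
      (Matrix.charpoly_sub_vecMulVec (v := y) (show A *ᵥ (lam • x) = lam • lam • x by
        rw [mulVec_smul, hx]))
    rw [dotProduct_smul, hyx, smul_eq_mul, mul_one, sub_self, C_0, sub_zero, smul_vecMulVec]
      at h
    simp only [Polynomial.map_mul, ← Matrix.charpoly_map, Polynomial.map_sub, map_X, map_C] at h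
    exact h
  have hroots : ∀ μ : ℂ, (charC N).IsRoot μ → ‖μ‖ < lam := by
    intro μ hμ
    rcases eq_zero_or_isRoot_of_X_sub_C_mul_eq_X_mul hchar (charpoly_monic _).ne_zero
      (by exact_mod_cast hpos.ne') hsimple hμ with rfl | ⟨hA, hne⟩
    · simpa using hpos
    · exact hdom μ hA hne
  have hpow (k : ℕ) : (lam ^ (k + 1))⁻¹ • A ^ (k + 1) =
      (lam ^ (k + 1))⁻¹ • N ^ (k + 1) + vecMulVec x y := by
    rw [pow_succ_eq_sub_vecMulVec_pow_add hx hy hyx, smul_add, smul_smul,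
      inv_mul_cancel₀ (pow_pos hpos _).ne', one_smul]
  have hN := (tendsto_add_atTop_iff_nat 1).2 (tendsto_inv_pow_smul_pow_of_charC_roots_lt hroots)
  rw [← tendsto_add_atTop_iff_nat 1]
  simpa only [hpow, zero_add] using hN.add_const (vecMulVec x y)

end PowerConvergence

theorem sjsWith_smul_iff {J : Finset (Fin n)} {M : Matrix (Fin n) (Fin n) ℝ} {c : ℝ}
    (hc : 0 < c) : SJSWith J (c • M) ↔ SJSWith J M := by
  simp only [SJSWith, Matrix.smul_apply, smul_pos_iff_of_pos_left hc, smul_neg_iff_of_pos_left hc]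

theorem sjsWith_vecMulVec {x y : Fin n → ℝ} (hxy : ∀ i, 0 < x i * y i) :
    SJSWith (Finset.univ.filter fun i => 0 < x i) (vecMulVec x y) := by
  intro i j
  have hi := hxy i
  have hj := hxy j
  simp only [Finset.mem_filter, Finset.mem_univ, true_and, vecMulVec_apply]
  rcases lt_or_gt_of_ne (left_ne_zero_of_mul hi.ne') with hxi | hxi <;>
    rcases lt_or_gt_of_ne (left_ne_zero_of_mul hj.ne') with hxj | hxj <;>
    simp only [hxi, hxj, hxi.not_gt, hxj.not_gt, iff_true, iff_false, not_true_eq_false,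
      not_false_eq_true, IsEmpty.forall_iff, forall_const, true_and, and_true] <;> nlinarith

theorem eventually_sjsWith_of_tendsto {J : Finset (Fin n)} {P : Matrix (Fin n) (Fin n) ℝ}
    {M : ℕ → Matrix (Fin n) (Fin n) ℝ} (hP : SJSWith J P) (hM : Tendsto M atTop (𝓝 P)) :
    ∀ᶠ k in atTop, SJSWith J (M k) := by
  simp only [SJSWith, eventually_all]
  intro i j
  have hij : Tendsto (fun k => M k i j) atTop (𝓝 (P i j)) :=
    tendsto_pi_nhds.1 (tendsto_pi_nhds.1 hM i) j
  by_cases h : i ∈ J ↔ j ∈ J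
  · filter_upwards [hij.eventually_const_lt ((hP i j).1 h)] with k hk
    exact ⟨fun _ => hk, fun h' => absurd h h'⟩
  · filter_upwards [hij.eventually_lt_const ((hP i j).2 h)] with k hk
    exact ⟨fun h' => absurd h' h, fun _ => hk⟩

theorem stmt3_general (A : Matrix (Fin n) (Fin n) ℝ) (lam : ℝ) (x xs : Fin n → ℝ)
    (hpos : 0 < lam)
    (hsimple : (charC A).rootMultiplicity (lam : ℂ) = 1)
    (hdom : ∀ μ : ℂ, (charC A).IsRoot μ → μ ≠ (lam : ℂ) → ‖μ‖ < lam)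
    (hx : A *ᵥ x = lam • x) (hxs : Aᵀ *ᵥ xs = lam • xs)
    (hsign : ∀ i, 0 < x i * xs i) :
    ∃ k0 : ℕ, ∀ k ≥ k0,
      SJSWith (Finset.univ.filter fun i => 0 < x i) (A ^ k) := by
  rcases isEmpty_or_nonempty (Fin n) with _ | _
  · exact ⟨0, fun _ _ i => isEmptyElim i⟩
  set c := xs ⬝ᵥ x
  have hc : 0 < c :=
    Finset.sum_pos (fun i _ => mul_comm (x i) (xs i) ▸ hsign i) Finset.univ_nonempty
  have hlim := tendsto_inv_pow_smul_pow_nhds_vecMulVec hpos hsimple hdom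
    (x := c⁻¹ • x) (by rw [mulVec_smul, hx, smul_comm]) hxs
    (by rw [dotProduct_smul, smul_eq_mul, inv_mul_cancel₀ hc.ne'])
  have hP : SJSWith (Finset.univ.filter fun i => 0 < x i) (vecMulVec (c⁻¹ • x) xs) := by
    rw [smul_vecMulVec, sjsWith_smul_iff (inv_pos.2 hc)]
    exact sjsWith_vecMulVec hsign
  obtain ⟨k0, hk0⟩ := eventually_atTop.1 (eventually_sjsWith_of_tendsto hP hlim)
  exact ⟨k0, fun k hk => (sjsWith_smul_iff (inv_pos.2 (pow_pos hpos k))).1 (hk0 k hk)⟩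

/-- signature equality property implies eventual strict
J-sign-symmetry, with `J = {i : xⁱ > 0}`. -/
theorem stmt3 (A : Matrix (Fin n) (Fin n) ℝ) (lam : ℝ) (x xs : Fin n → ℝ)
    (hpos : 0 < lam)
    (hroot : (charC A).IsRoot (lam : ℂ))
    (hsimple : (charC A).rootMultiplicity (lam : ℂ) = 1)
    (hdom : ∀ μ : ℂ, (charC A).IsRoot μ → μ ≠ (lam : ℂ) → ‖μ‖ < lam)
    (hx : A *ᵥ x = lam • x) (hxs : Aᵀ *ᵥ xs = lam • xs)
    (hnz : ∀ i, x i ≠ 0 ∧ xs i ≠ 0)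
    (hsign : ∀ i, 0 < x i * xs i) :
    ∃ k0 : ℕ, ∀ k ≥ k0,
      SJSWith (Finset.univ.filter fun i => 0 < x i) (A ^ k) :=
  stmt3_general A lam x xs hpos hsimple hdom hx hxs hsign
end

section
/- If a real n×n matrix A is eventually strictly J-sign-symmetric, then there exists a positive integer k such that A^k and A^{k+1} have the same sign pattern, i.e., sgn((A^k)_{ij}) = sgn((A^{k+1})_{ij}) for all i,j, and both A^k and A^{k+1} are strictly J-sign-symmetric. -/
open Matrix Polynomial Filter

variable {n : ℕ}

/- If `A ^ k` is strictly `J₁`-sign-symmetric and `A ^ (k + 1)` is strictly `J₂`-sign-symmetric,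
then `A ^ (k * (k + 1))` is both, since strict `J`-sign-symmetry is closed under products.
The sign of one matrix entry determines whether `i, j` lie on the same side of `J`, so `J₁` and
`J₂` induce the same partition of the indices, and the two powers have the same sign pattern. -/

namespace SJSWith

variable {J : Finset (Fin n)} {M N : Matrix (Fin n) (Fin n) ℝ}

theorem mul_s4 (hM : SJSWith J M) (hN : SJSWith J N) : SJSWith J (M * N) := by
  intro i j
  have hne : (Finset.univ : Finset (Fin n)).Nonempty := ⟨i, Finset.mem_univ i⟩
  constructor
  · intro hij
    refine Finset.sum_pos (fun l _ => ?_) hne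
    by_cases hl : i ∈ J ↔ l ∈ J
    · exact mul_pos ((hM i l).1 hl) ((hN l j).1 (hl.symm.trans hij))
    · exact mul_pos_of_neg_of_neg ((hM i l).2 hl) ((hN l j).2 (by tauto))
  · intro hij
    refine Finset.sum_neg (fun l _ => ?_) hne
    by_cases hl : i ∈ J ↔ l ∈ J
    · exact mul_neg_of_pos_of_neg ((hM i l).1 hl) ((hN l j).2 (by tauto))
    · exact mul_neg_of_neg_of_pos ((hM i l).2 hl) ((hN l j).1 (by tauto))

theorem pow_s4 (hM : SJSWith J M) : ∀ {m : ℕ}, m ≠ 0 → SJSWith J (M ^ m)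
  | 1, _ => by simpa using hM
  | m + 2, _ => by
    rw [pow_succ]
    exact (hM.pow_s4 m.succ_ne_zero).mul_s4 hM

theorem sign_apply (hM : SJSWith J M) (i j : Fin n) :
    Real.sign (M i j) = if (i ∈ J ↔ j ∈ J) then 1 else -1 := by
  split_ifs with hij
  · exact Real.sign_of_pos ((hM i j).1 hij)
  · exact Real.sign_of_neg ((hM i j).2 hij)

theorem mem_iff_mem_iff {J' : Finset (Fin n)} (hJ : SJSWith J M) (hJ' : SJSWith J' M)
    (i j : Fin n) : (i ∈ J ↔ j ∈ J) ↔ (i ∈ J' ↔ j ∈ J') := by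
  have h := (hJ.sign_apply i j).symm.trans (hJ'.sign_apply i j)
  split_ifs at h <;> first | tauto | norm_num at h

end SJSWith

/-- an eventually strictly J-sign-symmetric matrix has two consecutive
powers which are strictly J-sign-symmetric with the same sign pattern. -/
theorem stmt4 (A : Matrix (Fin n) (Fin n) ℝ) (h : ESJS A) :
    ∃ k : ℕ, 0 < k ∧
      (∀ i j, Real.sign ((A ^ k) i j) = Real.sign ((A ^ (k + 1)) i j)) ∧
      SJS (A ^ k) ∧ SJS (A ^ (k + 1)) := by
  obtain ⟨k₀, hk₀⟩ := h
  set k := max k₀ 1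
  have hk : 0 < k := lt_max_of_lt_right one_pos
  obtain ⟨J₁, hJ₁⟩ := hk₀ k (le_max_left _ _)
  obtain ⟨J₂, hJ₂⟩ := hk₀ (k + 1) ((le_max_left _ _).trans k.le_succ)
  have hP₁ : SJSWith J₁ (A ^ (k * (k + 1))) := by
    rw [pow_mul]; exact hJ₁.pow_s4 k.succ_ne_zero
  have hP₂ : SJSWith J₂ (A ^ (k * (k + 1))) := by
    rw [mul_comm, pow_mul]; exact hJ₂.pow_s4 hk.ne'
  refine ⟨k, hk, fun i j => ?_, ⟨J₁, hJ₁⟩, ⟨J₂, hJ₂⟩⟩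
  rw [hJ₁.sign_apply, hJ₂.sign_apply, if_congr (hP₁.mem_iff_mem_iff hP₂ i j) rfl rfl]
end

section
/- Let A be a real n×n matrix whose eigenvalues λ₁,…,λₙ are positive, simple, and pairwise distinct. Suppose for each j = 1,…,n the exterior products x₁∧⋯∧x_j of the eigenvectors (ordered by decreasing eigenvalue) can be chosen strictly positive. Then for every j, the j-th compound matrix A^(j) has the strong Perron–Frobenius property: its spectral radius λ₁⋯λ_j is a positive simple strictly dominant eigenvalue with a strictly positive eigenvector. -/
open Matrix Polynomial Filter

variable {n : ℕ}

/-!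
Let `Y = (x₁ ⋯ xₙ)` be the matrix of eigenvectors, so that `A Y = Y diag(λ)`; it is invertible
because `det Y = x₁ ∧ ⋯ ∧ xₙ > 0`. By the Cauchy–Binet formula the compound is multiplicative, hence
`A⁽ʲ⁾ Y⁽ʲ⁾ = Y⁽ʲ⁾ diag(λ_S)` with `λ_S = ∏_{i ∈ S} λᵢ`. So the eigenvalues of `A⁽ʲ⁾` are the `λ_S`,
and the column of `Y⁽ʲ⁾` at the initial segment `S₀ = {1, …, j}` is the positive vector
`x₁ ∧ ⋯ ∧ x_j`. As `λ` is positive and strictly decreasing, the `k`-th smallest element of any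
`S ≠ S₀` is at least the `k`-th one of `S₀`, and strictly larger for some `k`, so `λ_S < λ_{S₀}`.
-/

section CauchyBinet

open Finset

variable {R ι : Type*} [CommRing R] {j : ℕ}

theorem Matrix.sum_perm_det_submatrix_comp (M : Matrix (Fin j) ι R) (N : Matrix ι (Fin j) R)
    (e : Fin j → ι) :
    ∑ σ : Equiv.Perm (Fin j), (∏ i, N (e (σ i)) i) * (M.submatrix id (e ∘ σ)).det =
      (M.submatrix id e).det * (N.submatrix e id).det := by
  rw [det_apply' (N.submatrix e id), mul_sum]
  refine sum_congr rfl fun σ _ => ?_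
  have hperm : M.submatrix id (e ∘ σ) = (M.submatrix id e).submatrix id σ := rfl
  rw [hperm, det_permute']
  simp only [submatrix_apply, id_eq]
  ring

variable [Fintype ι]

theorem Matrix.det_mul_eq_sum_fun (M : Matrix (Fin j) ι R) (N : Matrix ι (Fin j) R) :
    (M * N).det = ∑ p : Fin j → ι, (∏ i, N (p i) i) * (M.submatrix id p).det := by
  have hexpand : (M * N).det = ∑ p : Fin j → ι, ∑ σ : Equiv.Perm (Fin j),
      (Equiv.Perm.sign σ : R) * ∏ i, M (σ i) (p i) * N (p i) i := by
    simp only [det_apply', mul_apply, prod_univ_sum, mul_sum, Fintype.piFinset_univ]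
    rw [sum_comm]
  rw [hexpand]
  refine sum_congr rfl fun p _ => ?_
  rw [det_apply', mul_sum]
  refine sum_congr rfl fun σ _ => ?_
  simp only [submatrix_apply, id_eq, prod_mul_distrib]
  ring

variable [LinearOrder ι]

theorem Finset.sum_injective_eq_sum_orderEmbOfFin_comp {β : Type*} [AddCommMonoid β]
    (f : (Fin j → ι) → β) :
    ∑ p with Function.Injective p, f p =
      ∑ s : {s : Finset ι // s.card = j}, ∑ σ : Equiv.Perm (Fin j),
        f (s.1.orderEmbOfFin s.2 ∘ σ) := by
  rw [← Fintype.sum_prod_type']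
  refine (sum_bij (fun q _ => q.1.1.orderEmbOfFin q.1.2 ∘ q.2) (fun q _ => ?_) ?_ ?_
    fun _ _ => rfl).symm
  · simpa using (q.1.1.orderEmbOfFin q.1.2).injective.comp q.2.injective
  · rintro ⟨s, σ⟩ - ⟨t, τ⟩ - h
    have hrange : ∀ (u : {s : Finset ι // s.card = j}) (ρ : Equiv.Perm (Fin j)),
        Set.range (u.1.orderEmbOfFin u.2 ∘ ρ) = u.1 := fun u ρ => by
      rw [ρ.surjective.range_comp, range_orderEmbOfFin]
    obtain rfl : s = t := Subtype.ext <| coe_inj.mp <| by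
      rw [← hrange s σ, ← hrange t τ]; exact congrArg Set.range h
    obtain rfl : σ = τ := Equiv.ext fun a => (s.1.orderEmbOfFin s.2).injective (congrFun h a)
    rfl
  · intro p hp
    have hp : Function.Injective p := by simpa using hp
    set s := univ.image p
    have hs : s.card = j := by rw [card_image_of_injective _ hp, card_univ, Fintype.card_fin]
    have hmem : ∀ i, p i ∈ s := fun i => mem_image_of_mem p (mem_univ i)
    let σ : Fin j → Fin j := fun i => (s.orderIsoOfFin hs).symm ⟨p i, hmem i⟩
    have hσ : ∀ i, s.orderEmbOfFin hs (σ i) = p i := fun i =>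
      congrArg Subtype.val ((s.orderIsoOfFin hs).apply_symm_apply ⟨p i, hmem i⟩)
    have hσinj : Function.Injective σ := fun a b hab => hp (by rw [← hσ a, ← hσ b, hab])
    exact ⟨(⟨s, hs⟩, Equiv.ofBijective σ (Finite.injective_iff_bijective.mp hσinj)),
      mem_univ _, funext hσ⟩

theorem Matrix.det_mul_eq_sum_det_submatrix (M : Matrix (Fin j) ι R) (N : Matrix ι (Fin j) R) :
    (M * N).det = ∑ s : {s : Finset ι // s.card = j},
      (M.submatrix id (s.1.orderEmbOfFin s.2)).det *
        (N.submatrix (s.1.orderEmbOfFin s.2) id).det := by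
  have hvanish : ∀ p : Fin j → ι, (∏ i, N (p i) i) * (M.submatrix id p).det ≠ 0 →
      Function.Injective p := fun p hp a b hab => by
    by_contra hne
    exact hp (by rw [det_zero_of_column_eq hne fun k => by simp [hab], mul_zero])
  rw [det_mul_eq_sum_fun, ← sum_filter_of_ne fun p _ => hvanish p,
    sum_injective_eq_sum_orderEmbOfFin_comp]
  exact sum_congr rfl fun s _ => sum_perm_det_submatrix_comp M N _

end CauchyBinet

section Compound

open Finset

theorem Finset.prod_orderEmbOfFin {α β : Type*} [LinearOrder α] [CommMonoid β] (s : Finset α)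
    {k : ℕ} (h : s.card = k) (f : α → β) : ∏ a, f (s.orderEmbOfFin h a) = ∏ i ∈ s, f i := by
  conv_rhs => rw [← map_orderEmbOfFin_univ s h, prod_map]
  rfl

theorem compound_apply (A : Matrix (Fin n) (Fin n) ℝ) (j : ℕ)
    (r c : {s : Finset (Fin n) // s.card = j}) :
    compound A j r c = (A.submatrix (r.1.orderEmbOfFin r.2) (c.1.orderEmbOfFin c.2)).det := rfl

theorem compound_mul (A B : Matrix (Fin n) (Fin n) ℝ) (j : ℕ) :
    compound (A * B) j = compound A j * compound B j := by
  ext r c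
  have hsplit : (A * B).submatrix (r.1.orderEmbOfFin r.2) (c.1.orderEmbOfFin c.2) =
      A.submatrix (r.1.orderEmbOfFin r.2) id * B.submatrix id (c.1.orderEmbOfFin c.2) := by
    ext a b
    simp [mul_apply]
  rw [mul_apply, compound_apply, hsplit, det_mul_eq_sum_det_submatrix]
  rfl

theorem compound_diagonal (d : Fin n → ℝ) (j : ℕ) :
    compound (diagonal d) j =
      diagonal fun s : {s : Finset (Fin n) // s.card = j} => ∏ i ∈ s.1, d i := by
  ext r c
  rcases eq_or_ne r c with rfl | hrc
  · rw [compound_apply, submatrix_diagonal _ _ (r.1.orderEmbOfFin r.2).injective, det_diagonal,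
      diagonal_apply_eq, ← prod_orderEmbOfFin r.1 r.2]
    rfl
  · obtain ⟨i, hir, hic⟩ : ∃ i ∈ r.1, i ∉ c.1 :=
      not_subset.mp fun hsub =>
        hrc <| Subtype.ext <| eq_of_subset_of_card_le hsub (by rw [r.2, c.2])
    obtain ⟨a, rfl⟩ : i ∈ Set.range (r.1.orderEmbOfFin r.2) := by
      rwa [range_orderEmbOfFin]
    rw [compound_apply, diagonal_apply_ne _ hrc]
    refine det_eq_zero_of_row_eq_zero a fun b => diagonal_apply_ne _ fun h => hic ?_
    rw [h]
    exact orderEmbOfFin_mem c.1 c.2 b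

theorem compound_one (j : ℕ) : compound (1 : Matrix (Fin n) (Fin n) ℝ) j = 1 := by
  rw [← diagonal_one, compound_diagonal]
  simp

end Compound

section Spectrum

variable {R m : Type*} [CommRing R] [Fintype m] [DecidableEq m]

theorem Matrix.charpoly_eq_of_mul_eq_mul {A P Q D : Matrix m m R} (hAP : A * P = P * D)
    (hQP : Q * P = 1) : A.charpoly = D.charpoly := by
  have hPQ : P * Q = 1 := mul_eq_one_comm.mp hQP
  calc A.charpoly = (P * (D * Q)).charpoly := by
        rw [← Matrix.mul_assoc, ← hAP, Matrix.mul_assoc, hPQ, Matrix.mul_one]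
    _ = (D * Q * P).charpoly := charpoly_mul_comm _ _
    _ = D.charpoly := by rw [Matrix.mul_assoc, hQP, Matrix.mul_one]

theorem Matrix.mul_eq_mul_diagonal_iff (A Y : Matrix m m R) (d : m → R) :
    A * Y = Y * diagonal d ↔ ∀ k, A *ᵥ Yᵀ k = d k • Yᵀ k := by
  simp only [← Matrix.ext_iff, mul_diagonal, funext_iff, mulVec, dotProduct, transpose_apply,
    Pi.smul_apply, smul_eq_mul]
  simp only [mul_apply, mul_comm (d _)]
  exact forall_comm

theorem charC_eq_prod_of_mul_eq_mul_diagonal {B P Q : Matrix m m ℝ} {μ : m → ℝ}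
    (hBP : B * P = P * diagonal μ) (hQP : Q * P = 1) :
    charC B = ∏ s, (X - C ((μ s : ℝ) : ℂ)) := by
  rw [charC, show (Complex.ofReal : ℝ → ℂ) = ⇑Complex.ofRealHom from rfl, charpoly_map,
    charpoly_eq_of_mul_eq_mul hBP hQP, charpoly_diagonal, Polynomial.map_prod]
  simp

theorem strongPFAt_of_charC_eq_prod {B : Matrix m m ℝ} {μ : m → ℝ} {s₀ : m}
    (hchar : charC B = ∏ s, (X - C ((μ s : ℝ) : ℂ))) (hpos : 0 < μ s₀)
    (hdom : ∀ s ≠ s₀, |μ s| < μ s₀) {v : m → ℝ} (hv : ∀ i, 0 < v i)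
    (hBv : B *ᵥ v = μ s₀ • v) : StrongPFAt B (μ s₀) := by
  have hroots : (charC B).roots = Finset.univ.val.map fun s => ((μ s : ℝ) : ℂ) := by
    rw [hchar, ← roots_multiset_prod_X_sub_C (Finset.univ.val.map _), Multiset.map_map]
    rfl
  have hne : charC B ≠ 0 := by
    rw [hchar]
    exact (monic_prod_of_monic _ _ fun s _ => monic_X_sub_C _).ne_zero
  have hμ : ∀ s, μ s₀ = μ s ↔ s = s₀ := fun s => by
    refine ⟨fun h => by_contra fun hs => ?_, fun h => h ▸ rfl⟩
    have := hdom s hs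
    rw [← h, abs_of_pos hpos] at this
    exact lt_irrefl _ this
  have hmem : ∀ ν, (charC B).IsRoot ν ↔ ∃ s, ((μ s : ℝ) : ℂ) = ν := fun ν => by
    rw [← mem_roots hne, hroots]
    simp
  refine ⟨hpos, (hmem _).2 ⟨s₀, rfl⟩, ?_, fun ν hν hν₀ => ?_, v, hv, hBv⟩
  · rw [← count_roots, hroots, Multiset.count_map]
    simp only [Complex.ofReal_inj, hμ, Multiset.filter_eq', Multiset.card_replicate]
    exact Multiset.count_eq_one_of_mem Finset.univ.nodup (Finset.mem_univ s₀)
  · obtain ⟨s, rfl⟩ := (hmem ν).1 hν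
    rw [Complex.norm_real, Real.norm_eq_abs]
    exact hdom s fun h => hν₀ (h ▸ rfl)

end Spectrum

section InitialSegment

open Finset

theorem Fin.val_le_val_of_strictMono {j : ℕ} {f : Fin j → Fin n} (hf : StrictMono f)
    (a : Fin j) : (a : ℕ) ≤ f a := by
  obtain ⟨k, hk⟩ := a
  induction k with
  | zero => exact Nat.zero_le _
  | succ k ih =>
    have hlt : f ⟨k, by omega⟩ < f ⟨k + 1, hk⟩ := hf (Fin.mk_lt_mk.mpr k.lt_succ_self)
    have hk' : k ≤ f ⟨k, by omega⟩ := ih (by omega)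
    rw [Fin.lt_def] at hlt
    show k + 1 ≤ f ⟨k + 1, hk⟩
    omega

theorem Fin.card_filter_val_lt_of_le {j : ℕ} (hj : j ≤ n) :
    (univ.filter fun i : Fin n => (i : ℕ) < j).card = j := by
  rw [card_filter_val_lt, min_eq_right hj]

theorem Fin.orderEmbOfFin_filter_val_lt {j : ℕ} (hj : j ≤ n) (a : Fin j) :
    (univ.filter fun i : Fin n => (i : ℕ) < j).orderEmbOfFin (card_filter_val_lt_of_le hj) a =
      Fin.castLE hj a := by
  rw [← orderEmbOfFin_unique (card_filter_val_lt_of_le hj) (fun b => by simp)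
    (strictMono_castLE hj)]

theorem Fin.prod_lt_prod_filter_val_lt {R : Type*} [CommSemiring R] [PartialOrder R]
    [IsStrictOrderedRing R] {f : Fin n → R} (hf : StrictAnti f) (hpos : ∀ i, 0 < f i) {j : ℕ}
    (hj : j ≤ n) {s : Finset (Fin n)} (hs : s.card = j)
    (hne : s ≠ univ.filter fun i : Fin n => (i : ℕ) < j) :
    ∏ i ∈ s, f i < ∏ i ∈ univ.filter (fun i : Fin n => (i : ℕ) < j), f i := by
  have hle : ∀ a, Fin.castLE hj a ≤ s.orderEmbOfFin hs a := fun a =>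
    val_le_val_of_strictMono (s.orderEmbOfFin hs).strictMono a
  rw [← prod_orderEmbOfFin s hs,
    ← prod_orderEmbOfFin (univ.filter fun i : Fin n => (i : ℕ) < j) (card_filter_val_lt_of_le hj),
    prod_congr rfl fun a _ => congrArg f (orderEmbOfFin_filter_val_lt hj a)]
  refine prod_lt_prod (fun a _ => hpos _) (fun a _ => hf.antitone (hle a)) ?_
  by_contra! hge
  have heq : ∀ a, s.orderEmbOfFin hs a = Fin.castLE hj a := fun a =>
    hf.injective (eq_of_le_of_not_lt (hf.antitone (hle a)) (hge a (mem_univ a)))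
  refine hne (coe_inj.mp ?_)
  rw [← range_orderEmbOfFin s hs, ← range_orderEmbOfFin _ (card_filter_val_lt_of_le hj)]
  exact congrArg Set.range (funext fun a => (heq a).trans (orderEmbOfFin_filter_val_lt hj a).symm)

end InitialSegment

section Wedge

open Finset

theorem wedge_eq_compound_transpose (x : Fin n → Fin n → ℝ) {j : ℕ} (hj : j ≤ n) :
    wedge x j hj = (compound (of x)ᵀ j)ᵀ
      ⟨univ.filter fun i : Fin n => (i : ℕ) < j, Fin.card_filter_val_lt_of_le hj⟩ := by
  ext c
  unfold wedge
  rw [transpose_apply, compound_apply]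
  refine congrArg det (Matrix.ext fun a b => ?_)
  rw [submatrix_apply, Fin.orderEmbOfFin_filter_val_lt]
  rfl

theorem wedge_top (x : Fin n → Fin n → ℝ) (s : {s : Finset (Fin n) // s.card = n}) :
    wedge x n le_rfl s = (of x).det := by
  have huniv : s.1 = univ := eq_univ_of_card _ (s.2.trans (Fintype.card_fin n).symm)
  have hs : ∀ a, s.1.orderEmbOfFin s.2 a = a := fun a =>
    (congrFun (orderEmbOfFin_unique s.2 (fun b => huniv ▸ mem_univ b) strictMono_id) a).symm
  rw [← det_transpose]
  refine congrArg det (Matrix.ext fun a b => ?_)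
  simp only [of_apply, Fin.castLE_rfl, id_eq, transpose_apply]
  exact congrArg (x b) (hs a)

end Wedge

theorem stmt6_general (A : Matrix (Fin n) (Fin n) ℝ) (lam : Fin n → ℝ) (x : Fin n → Fin n → ℝ)
    (hanti : StrictAnti lam) (hpos : ∀ i, 0 < lam i)
    (hx : ∀ i, A *ᵥ x i = lam i • x i)
    (hwedge : ∀ (j : ℕ) (hj : j ≤ n), 1 ≤ j → ∀ s, 0 < wedge x j hj s) :
    ∀ (j : ℕ), 1 ≤ j → j ≤ n →
      StrongPFAt (compound A j)
        (∏ i ∈ Finset.univ.filter (fun i : Fin n => (i : ℕ) < j), lam i) := by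
  intro j hj hjn
  set Y : Matrix (Fin n) (Fin n) ℝ := (of x)ᵀ
  have hAY : A * Y = Y * diagonal lam := (mul_eq_mul_diagonal_iff A Y lam).2 hx
  have hY : IsUnit Y.det := by
    rw [det_transpose, ← wedge_top x ⟨Finset.univ, Finset.card_fin n⟩]
    exact (hwedge n le_rfl (hj.trans hjn) _).ne'.isUnit
  have hcomp : compound A j * compound Y j =
      compound Y j * diagonal fun s : {s : Finset (Fin n) // s.card = j} => ∏ i ∈ s.1, lam i := by
    rw [← compound_mul, hAY, compound_mul, compound_diagonal]
  have hinv : compound Y⁻¹ j * compound Y j = 1 := by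
    rw [← compound_mul, nonsing_inv_mul Y hY, compound_one]
  refine strongPFAt_of_charC_eq_prod (μ := fun s => ∏ i ∈ s.1, lam i)
    (s₀ := ⟨_, Fin.card_filter_val_lt_of_le hjn⟩)
    (charC_eq_prod_of_mul_eq_mul_diagonal hcomp hinv) (Finset.prod_pos fun i _ => hpos i)
    (fun s hs => ?_) (hwedge j hjn hj) ?_
  · rw [abs_of_pos (Finset.prod_pos fun i _ => hpos i)]
    exact Fin.prod_lt_prod_filter_val_lt hanti hpos hjn s.2 fun h => hs (Subtype.ext h)
  · rw [wedge_eq_compound_transpose]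
    exact (mul_eq_mul_diagonal_iff _ _ _).1 hcomp _

/-- if `A` has positive simple distinct eigenvalues and all exterior
products of the eigenvectors are strictly positive, then every compound matrix has
the strong Perron–Frobenius property with dominant eigenvalue `λ₁⋯λ_j`. -/
theorem stmt6 (A : Matrix (Fin n) (Fin n) ℝ) (lam : Fin n → ℝ) (x : Fin n → Fin n → ℝ)
    (hanti : StrictAnti lam) (hpos : ∀ i, 0 < lam i)
    (hchar : charC A = ∏ i : Fin n, (X - C (lam i : ℂ)))
    (hx : ∀ i, A *ᵥ x i = lam i • x i)
    (hwedge : ∀ (j : ℕ) (hj : j ≤ n), 1 ≤ j → ∀ s, 0 < wedge x j hj s) :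
    ∀ (j : ℕ), 1 ≤ j → j ≤ n →
      StrongPFAt (compound A j)
        (∏ i ∈ Finset.univ.filter (fun i : Fin n => (i : ℕ) < j), lam i) :=
  stmt6_general A lam x hanti hpos hx hwedge
end

section
/- If A and B are eventually strictly totally positive n×n matrices and AB = BA, then AB is eventually strictly totally positive. -/
open Matrix Polynomial Filter

variable {n : ℕ}

/-!
By the Cauchy–Binet formula every minor of `A * B` is a sum, over the `j`-subsets `s`, of a
minor of `A` with columns `s` times a minor of `B` with rows `s`; so a product of strictly
totally positive matrices is strictly totally positive. For commuting `A`, `B` we have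
`(A * B) ^ k = A ^ k * B ^ k`, and both factors are strictly totally positive for large `k`.
-/

open Finset Equiv

section CauchyBinet

variable {R : Type*} [CommRing R] {ι : Type*}

theorem Matrix.det_mul_eq_sum_prod_mul_det_submatrix [Fintype ι] {m : Type*} [Fintype m]
    [DecidableEq m] (M : Matrix m ι R) (P : Matrix ι m R) :
    (M * P).det = ∑ p : m → ι, (∏ i, M i (p i)) * (P.submatrix p id).det := by
  have hrows : M * P = Matrix.of fun i => ∑ k, M i k • P k := by
    ext i c; simp [Matrix.mul_apply]
  rw [hrows]
  change detRowAlternating.toMultilinearMap (fun i => ∑ k, M i k • P k) = _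
  rw [MultilinearMap.map_sum]
  refine Fintype.sum_congr _ _ fun p => ?_
  rw [MultilinearMap.map_smul_univ]
  rfl

variable [LinearOrder ι]

theorem Finset.image_orderIsoOfFin_comp_perm {j : ℕ} (s : {s : Finset ι // s.card = j})
    (σ : Perm (Fin j)) : univ.image (fun i => (s.1.orderIsoOfFin s.2 (σ i) : ι)) = s.1 := by
  ext x
  simp only [mem_image, mem_univ, true_and]
  refine ⟨fun ⟨i, hi⟩ => hi ▸ coe_mem _, fun hx => ?_⟩
  exact ⟨σ.symm ((s.1.orderIsoOfFin s.2).symm ⟨x, hx⟩), by simp⟩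

/-- An injective `p : Fin j → ι` factors uniquely as the increasing enumeration of its image
after a permutation of `Fin j`. -/
theorem Finset.sum_filter_injective_eq_sum_sum_perm [Fintype ι] {M : Type*} [AddCommMonoid M]
    {j : ℕ} (f : (Fin j → ι) → M) :
    ∑ p : Fin j → ι with Function.Injective p, f p =
      ∑ s : {s : Finset ι // s.card = j}, ∑ σ : Perm (Fin j),
        f fun i => s.1.orderIsoOfFin s.2 (σ i) := by
  rw [← Fintype.sum_prod_type']
  refine (Finset.sum_bij (fun x _ i => (x.1.1.orderIsoOfFin x.1.2 (x.2 i) : ι))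
    ?_ ?_ ?_ fun _ _ => rfl).symm
  · intro x _
    simp only [mem_filter, mem_univ, true_and]
    intro a b hab
    exact x.2.injective ((x.1.1.orderIsoOfFin x.1.2).injective (Subtype.ext hab))
  · rintro ⟨s, σ⟩ _ ⟨t, τ⟩ _ h
    obtain rfl : s = t := Subtype.ext <| by
      rw [← image_orderIsoOfFin_comp_perm s σ, ← image_orderIsoOfFin_comp_perm t τ]
      exact image_congr fun i _ => congrFun h i
    exact Prod.ext rfl <| Equiv.ext fun i =>
      (s.1.orderIsoOfFin s.2).injective (Subtype.ext (congrFun h i))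
  · intro p hp
    simp only [mem_filter, mem_univ, true_and] at hp
    have hcard : (univ.image p).card = j := by
      rw [card_image_of_injective _ hp, card_univ, Fintype.card_fin]
    set e := (univ.image p).orderIsoOfFin hcard
    have hmem : ∀ i, p i ∈ univ.image p := fun i => mem_image_of_mem p (mem_univ i)
    have hσ : Function.Injective fun i => e.symm ⟨p i, hmem i⟩ :=
      fun a b hab => hp (Subtype.ext_iff.mp (e.symm.injective hab))
    refine ⟨⟨⟨univ.image p, hcard⟩,
      Equiv.ofBijective _ (Finite.injective_iff_bijective.mp hσ)⟩, mem_univ _, ?_⟩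
    funext i
    exact congrArg Subtype.val (e.apply_symm_apply ⟨p i, hmem i⟩)

theorem Matrix.det_mul_eq_sum_det_submatrix_mul_det_submatrix [Fintype ι] {j : ℕ}
    (M : Matrix (Fin j) ι R) (P : Matrix ι (Fin j) R) :
    (M * P).det = ∑ s : {s : Finset ι // s.card = j},
      (M.submatrix id fun i => (s.1.orderIsoOfFin s.2 i : ι)).det *
        (P.submatrix (fun i => (s.1.orderIsoOfFin s.2 i : ι)) id).det := by
  classical
  have hnoninj (p : Fin j → ι) (hp : ¬Function.Injective p) : (P.submatrix p id).det = 0 := by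
    obtain ⟨a, b, hab, hne⟩ : ∃ a b, p a = p b ∧ a ≠ b := by
      simpa [Function.Injective] using hp
    exact det_zero_of_row_eq hne (funext fun c => by simp [hab])
  rw [det_mul_eq_sum_prod_mul_det_submatrix, ← sum_filter_of_ne (p := Function.Injective)
      fun p _ hp => by_contra fun hinj => hp (by rw [hnoninj p hinj, mul_zero]),
    sum_filter_injective_eq_sum_sum_perm]
  refine Fintype.sum_congr _ _ fun s => ?_
  set e := fun i => (s.1.orderIsoOfFin s.2 i : ι)
  have hperm (σ : Perm (Fin j)) :
      (P.submatrix (fun i => e (σ i)) id).det = Perm.sign σ * (P.submatrix e id).det := by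
    simpa [Function.comp_def] using det_permute σ (P.submatrix e id)
  rw [← det_transpose (M.submatrix id e), det_apply', sum_mul]
  refine Fintype.sum_congr _ _ fun σ => ?_
  rw [hperm σ]
  simp only [transpose_apply, submatrix_apply, id]
  ring

end CauchyBinet

theorem STP.det_submatrix_pos {A : Matrix (Fin n) (Fin n) ℝ} (hA : STP A) {j : ℕ} (hj : 0 < j)
    (r c : Finset (Fin n)) (hr : r.card = j) (hc : c.card = j) :
    0 < (A.submatrix (fun i : Fin j => (r.orderIsoOfFin hr i : Fin n))
      (fun i : Fin j => (c.orderIsoOfFin hc i : Fin n))).det := by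
  subst hr
  exact hA r c hc (card_pos.mp hj)

theorem STP.mul {A B : Matrix (Fin n) (Fin n) ℝ} (hA : STP A) (hB : STP B) : STP (A * B) := by
  intro r c h hr
  have hj : 0 < r.card := card_pos.mpr hr
  rw [minor, submatrix_mul _ _ _ id _ Function.bijective_id,
    det_mul_eq_sum_det_submatrix_mul_det_submatrix]
  refine sum_pos (fun s _ => mul_pos ?_ ?_) ⟨⟨r, rfl⟩, mem_univ _⟩
  · exact hA.det_submatrix_pos hj r s.1 rfl s.2
  · exact hB.det_submatrix_pos hj s.1 c s.2 h

/-- the product of two commuting eventually strictly totally positive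
matrices is eventually strictly totally positive. -/
theorem stmt10 (A B : Matrix (Fin n) (Fin n) ℝ)
    (hA : ESTP A) (hB : ESTP B) (hcomm : A * B = B * A) :
    ESTP (A * B) := by
  obtain ⟨a, ha⟩ := hA
  obtain ⟨b, hb⟩ := hB
  refine ⟨max a b, fun k hk => ?_⟩
  rw [Commute.mul_pow hcomm]
  exact (ha k (le_of_max_le_left hk)).mul (hb k (le_of_max_le_right hk))
end

section
/- Let S be an invertible real n×n matrix such that both S and S* (where s*_{ij} = (−1)^{i+j} s_{ij}) are totally nonnegative (all minors ≥ 0). Then S is a diagonal matrix with positive diagonal entries. -/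
open Matrix Polynomial Filter

variable {n : ℕ}

/- The entries of `S` and of `S*` are `1 × 1` minors, so `S` is entrywise nonnegative and
vanishes where `i + j` is odd. Suppose `S i j > 0` for some `i < j`; then `j ≥ i + 2` and
`S (i+1) j = 0`. The `2 × 2` minors on rows `i < i+1` force row `i+1` to vanish on the columns
`≤ j`; since `S` is invertible this row has a positive entry in some column `l > j`, and the
`2 × 2` minors on rows `i+1 < r` then force the whole block of rows `≥ i+1` and columns `≤ j`
to vanish. That block has `(n - i - 1) + (j + 1) > n` rows and columns, so `det S = 0`.
Transposition handles the entries below the diagonal. -/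

theorem Matrix.det_eq_zero_of_zero_block {m R : Type*} [Fintype m] [DecidableEq m] [CommRing R]
    (A : Matrix m m R) (s t : Finset m) (hzero : ∀ i ∈ s, ∀ j ∈ t, A i j = 0)
    (hcard : Fintype.card m < s.card + t.card) : A.det = 0 := by
  rw [det_apply]
  refine Finset.sum_eq_zero fun σ _ => ?_
  obtain ⟨j, hj, hσj⟩ : ∃ j ∈ t, σ j ∈ s := by
    by_contra! h
    have : t.card ≤ sᶜ.card :=
      Finset.card_le_card_of_injOn σ (fun j hj => Finset.mem_compl.2 (h j hj)) σ.injective.injOn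
    rw [Finset.card_compl] at this
    have := s.card_le_univ
    omega
  rw [Finset.prod_eq_zero (f := fun i => A (σ i) i) (Finset.mem_univ j) (hzero _ hσj j hj),
    smul_zero]

theorem Finset.orderEmbOfFin_pair {α : Type*} [LinearOrder α] {a b : α} (hab : a < b) :
    ⇑(({a, b} : Finset α).orderEmbOfFin (Finset.card_pair hab.ne)) = ![a, b] := by
  symm
  apply Finset.orderEmbOfFin_unique
  · intro x
    fin_cases x <;> simp
  · intro x y hxy
    fin_cases x <;> fin_cases y <;> simp_all

section Minors

variable (A : Matrix (Fin n) (Fin n) ℝ)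

theorem minor_eq_det_orderEmbOfFin {m : ℕ} (r c : Finset (Fin n)) (h : c.card = r.card)
    (hr : r.card = m) :
    minor A r c h =
      (Matrix.of fun a b : Fin m =>
        A (r.orderEmbOfFin hr a) (c.orderEmbOfFin (h.trans hr) b)).det := by
  rw [minor, ← Matrix.det_submatrix_equiv_self (finCongr hr)]
  rfl

theorem minor_singleton (i j : Fin n)
    (h : ({j} : Finset (Fin n)).card = ({i} : Finset (Fin n)).card) :
    minor A {i} {j} h = A i j := by
  rw [minor_eq_det_orderEmbOfFin A {i} {j} h (Finset.card_singleton i), Matrix.det_fin_one]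
  simp [Finset.orderEmbOfFin_singleton]

theorem minor_pair {i k j l : Fin n} (hik : i < k) (hjl : j < l)
    (h : ({j, l} : Finset (Fin n)).card = ({i, k} : Finset (Fin n)).card) :
    minor A {i, k} {j, l} h = A i j * A k l - A i l * A k j := by
  rw [minor_eq_det_orderEmbOfFin A {i, k} {j, l} h (Finset.card_pair hik.ne), Matrix.det_fin_two]
  simp [Finset.orderEmbOfFin_pair hik, Finset.orderEmbOfFin_pair hjl]

theorem minor_transpose (r c : Finset (Fin n)) (h : c.card = r.card) :
    minor Aᵀ r c h = minor A c r h.symm := by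
  rw [minor_eq_det_orderEmbOfFin Aᵀ r c h rfl, minor_eq_det_orderEmbOfFin A c r h.symm h,
    ← Matrix.det_transpose]
  rfl

theorem checker_transpose : checker Aᵀ = (checker A)ᵀ := by
  ext i j
  simp [checker, add_comm]

end Minors

namespace TotNonneg

variable {A : Matrix (Fin n) (Fin n) ℝ}

theorem transpose (hA : TotNonneg A) : TotNonneg Aᵀ := fun r c h => by
  rw [minor_transpose]
  exact hA c r h.symm

theorem entry_nonneg (hA : TotNonneg A) (i j : Fin n) : 0 ≤ A i j := by
  have h := hA {i} {j} (by simp)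
  rwa [minor_singleton] at h

theorem det_two_nonneg (hA : TotNonneg A) {i k j l : Fin n} (hik : i < k) (hjl : j < l) :
    0 ≤ A i j * A k l - A i l * A k j := by
  have h := hA {i, k} {j, l} (by rw [Finset.card_pair hik.ne, Finset.card_pair hjl.ne])
  rwa [minor_pair A hik hjl] at h

theorem eq_zero_left_of_zero_below_pos (hA : TotNonneg A) {i k j l : Fin n} (hik : i < k)
    (hjl : j < l) (hpos : 0 < A i l) (hzero : A k l = 0) : A k j = 0 := by
  have := hA.det_two_nonneg hik hjl
  have := hA.entry_nonneg k j
  rw [hzero] at *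
  nlinarith

theorem eq_zero_below_of_zero_left_of_pos (hA : TotNonneg A) {i k j l : Fin n} (hik : i < k)
    (hjl : j < l) (hpos : 0 < A i l) (hzero : A i j = 0) : A k j = 0 := by
  have := hA.det_two_nonneg hik hjl
  have := hA.entry_nonneg k j
  rw [hzero] at *
  nlinarith

theorem eq_zero_of_checker_of_odd (h1 : TotNonneg A) (h2 : TotNonneg (checker A))
    {i j : Fin n} (hodd : Odd ((i : ℕ) + j)) : A i j = 0 := by
  have hA := h1.entry_nonneg i j
  have hA' := h2.entry_nonneg i j
  simp only [checker, Matrix.of_apply, hodd.neg_one_pow, neg_one_mul] at hA'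
  linarith

theorem eq_zero_of_checker_of_lt {S : Matrix (Fin n) (Fin n) ℝ} (h1 : TotNonneg S)
    (h2 : TotNonneg (checker S)) (hS : IsUnit S.det) {i j : Fin n} (hij : i < j) : S i j = 0 := by
  by_contra hne
  have hpos : 0 < S i j := (h1.entry_nonneg i j).lt_of_ne' hne
  have heven : Even ((i : ℕ) + j) := by
    by_contra hodd
    exact hne (h1.eq_zero_of_checker_of_odd h2 (Nat.not_even_iff_odd.1 hodd))
  have hij2 : (i : ℕ) + 2 ≤ j := by
    obtain ⟨t, ht⟩ := heven
    rw [Fin.lt_def] at hij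
    omega
  let k : Fin n := ⟨i + 1, by omega⟩
  have hik : i < k := Fin.lt_def.2 (Nat.lt_succ_self _)
  have hkj0 : S k j = 0 := h1.eq_zero_of_checker_of_odd h2 (show Odd ((i : ℕ) + 1 + j) by
    rw [add_right_comm, Nat.odd_add_one]
    exact Nat.not_odd_iff_even.2 heven)
  have hrow : ∀ c ≤ j, S k c = 0 := fun c hc => hc.lt_or_eq.elim
    (fun hcj => h1.eq_zero_left_of_zero_below_pos hik hcj hpos hkj0) (fun hcj => hcj ▸ hkj0)
  obtain ⟨l, hl⟩ : ∃ l, S k l ≠ 0 := by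
    by_contra! h
    exact hS.ne_zero (Matrix.det_eq_zero_of_row_eq_zero k h)
  have hjl : j < l := lt_of_not_ge fun hlj => hl (hrow l hlj)
  have hklpos : 0 < S k l := (h1.entry_nonneg k l).lt_of_ne' hl
  have hblock : ∀ r ∈ Finset.Ici k, ∀ c ∈ Finset.Iic j, S r c = 0 := by
    intro r hr c hc
    rw [Finset.mem_Ici] at hr
    rw [Finset.mem_Iic] at hc
    exact hr.lt_or_eq.elim
      (fun hkr => h1.eq_zero_below_of_zero_left_of_pos hkr (hc.trans_lt hjl) hklpos (hrow c hc))
      (fun hkr => hkr ▸ hrow c hc)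
  refine hS.ne_zero (S.det_eq_zero_of_zero_block _ _ hblock ?_)
  rw [Fin.card_Ici, Fin.card_Iic, Fintype.card_fin]
  simp only [k]
  omega

end TotNonneg

/-- an invertible matrix that is totally nonnegative together with its
checkerboard transform is a positive diagonal matrix. -/
theorem stmt14 (S : Matrix (Fin n) (Fin n) ℝ) (hS : IsUnit S.det)
    (h1 : TotNonneg S) (h2 : TotNonneg (checker S)) :
    ∃ d : Fin n → ℝ, (∀ i, 0 < d i) ∧ S = diagonal d := by
  have hST : IsUnit Sᵀ.det := by rwa [det_transpose]
  have h2T : TotNonneg (checker Sᵀ) := by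
    rw [checker_transpose]
    exact h2.transpose
  have hdiag : S.IsDiag := fun i j hij => hij.lt_or_gt.elim (h1.eq_zero_of_checker_of_lt h2 hS)
    (h1.transpose.eq_zero_of_checker_of_lt h2T hST)
  refine ⟨S.diag, fun i => (h1.entry_nonneg i i).lt_of_ne' ?_, hdiag.diagonal_diag.symm⟩
  have hdet : (diagonal S.diag).det ≠ 0 := hdiag.diagonal_diag.symm ▸ hS.ne_zero
  rw [det_diagonal] at hdet
  exact Finset.prod_ne_zero_iff.1 hdet i (Finset.mem_univ i)
end
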